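/- arXiv:1306.0108 — 2 statements merged into one kernel-verified Lean document; each statement's English description precedes it below -/
import Mathlib

section
/- Let R be a local ring and let A = [[a, v], [0, b]] ∈ T₂(R) be an upper triangular 2 × 2 matrix over R. Then A is strongly P-clean in T₂(R) if and only if a and b each lie in P(R) ∪ (1 + P(R)). -/
/-- An element `a` of a ring is strongly nilpotent if every sequence
`a = a₀, a₁, a₂, …` with `a_{i+1} ∈ a_i R a_i` is eventually zero. -/
def IsStronglyNilpotent {R : Type*} [Ring R] (a : R) : Prop :=
  ∀ f : ℕ → R, f 0 = a → (∀ i, ∃ r : R, f (i + 1) = f i * r * f i) → ∃ n, f n = 0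

/-- The prime radical `P(R)`: the set of strongly nilpotent elements
(equivalently, the intersection of all prime ideals). -/
def primeRadical (R : Type*) [Ring R] : Set R :=
  {a | IsStronglyNilpotent a}

/-- An element is strongly P-clean if it is the sum of an idempotent and an
element of the prime radical that commute. -/
def IsStronglyPClean {R : Type*} [Ring R] (x : R) : Prop :=
  ∃ e w : R, IsIdempotentElem e ∧ w ∈ primeRadical R ∧ x = e + w ∧ e * w = w * e

/-- A ring is strongly P-clean if each of its elements is strongly P-clean. -/
def StronglyPCleanRing (R : Type*) [Ring R] : Prop :=
  ∀ x : R, IsStronglyPClean x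

/-- The ring `Tₙ(R)` of upper triangular `n × n` matrices over `R`, as a
subring of the full matrix ring. -/
def upperTriangularSubring (n : ℕ) (R : Type*) [Ring R] :
    Subring (Matrix (Fin n) (Fin n) R) where
  carrier := {A | ∀ i j : Fin n, j < i → A i j = 0}
  zero_mem' := fun _ _ _ => rfl
  one_mem' := fun _ _ h => Matrix.one_apply_ne (ne_of_gt h)
  add_mem' := by
    intro A B hA hB i j h
    simp [Matrix.add_apply, hA i j h, hB i j h]
  neg_mem' := by
    intro A hA i j h
    simp [Matrix.neg_apply, hA i j h]
  mul_mem' := by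
    intro A B hA hB i j hij
    rw [Matrix.mul_apply]
    apply Finset.sum_eq_zero
    intro k _
    rcases lt_or_ge k i with hk | hk
    · rw [hA i k hk, zero_mul]
    · rw [hB k j (lt_of_lt_of_le hij hk), mul_zero]

/-!
The diagonal is a surjective ring homomorphism `T₂(R) → R × R`, so a strongly P-clean
decomposition of `A` yields decompositions of `a` and `b`, and in a local ring the only
idempotents are `0` and `1`. Conversely, an upper triangular matrix with strongly nilpotent
diagonal is strongly nilpotent, since a matrix `N` with zero diagonal satisfies `N X N = 0`.
If `a` and `b` both lie in `P(R)` (or both in `1 + P(R)`), take the idempotent `0` (or `1`).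
If `a ∈ 1 + P(R)` and `b ∈ P(R)`, take the idempotent `[[1, x], [0, 0]]`: it commutes with the
remainder exactly when `a x - x b = v`, and this Sylvester equation is solvable because
`x ↦ a x - x b` is a unit plus a commuting nilpotent operator. The case `a ∈ P(R)`,
`b ∈ 1 + P(R)` is symmetric, with the idempotent `[[0, x], [0, 1]]`.
-/

section StronglyNilpotent

variable {R S : Type*} [Ring R] [Ring S]

theorem IsStronglyNilpotent.isNilpotent {x : R} (h : IsStronglyNilpotent x) :
    IsNilpotent x := by
  obtain ⟨n, hn⟩ := h (fun i => x ^ 2 ^ i) (by simp)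
    (fun i => ⟨1, by rw [mul_one, ← pow_add, pow_succ, mul_two]⟩)
  exact ⟨2 ^ n, hn⟩

theorem IsStronglyNilpotent.map {a : R} (h : IsStronglyNilpotent a) (f : R →+* S)
    (hf : Function.Surjective f) : IsStronglyNilpotent (f a) := by
  intro g hg₀ hg
  choose r hr using hg
  choose s hs using fun i => hf (r i)
  let F : ℕ → R := fun n => Nat.rec a (fun i Fi => Fi * s i * Fi) n
  have hFg : ∀ n, f (F n) = g n := by
    intro n
    induction n with
    | zero => exact hg₀.symm
    | succ n ih => rw [hr n, ← ih, ← hs n, ← map_mul, ← map_mul]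
  obtain ⟨n, hn⟩ := h F rfl (fun i => ⟨s i, rfl⟩)
  exact ⟨n, by rw [← hFg, hn, map_zero]⟩

theorem IsStronglyNilpotent.of_map {a : R} (f : R →+* S)
    (hker : ∀ x, f x = 0 → ∀ r, x * r * x = 0) (h : IsStronglyNilpotent (f a)) :
    IsStronglyNilpotent a := by
  intro F hF₀ hF
  choose r hr using hF
  obtain ⟨n, hn⟩ := h (fun i => f (F i)) (by rw [hF₀])
    (fun i => ⟨f (r i), by rw [hr i, map_mul, map_mul]⟩)
  exact ⟨n + 1, by rw [hr n]; exact hker _ hn _⟩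

theorem IsStronglyNilpotent.pi {ι : Type*} [Finite ι] {R : ι → Type*} [∀ i, Ring (R i)]
    {x : ∀ i, R i} (h : ∀ i, IsStronglyNilpotent (x i)) : IsStronglyNilpotent x := by
  intro F hF₀ hF
  choose r hr using hF
  have stays_zero : ∀ i n, F n i = 0 → ∀ m, n ≤ m → F m i = 0 := by
    intro i n hn m hm
    induction m, hm using Nat.le_induction with
    | base => exact hn
    | succ m _ ih => rw [hr m, Pi.mul_apply, Pi.mul_apply, ih, zero_mul, zero_mul]
  choose N hN using fun i => h i (fun n => F n i) (by rw [hF₀])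
    (fun n => ⟨r n i, by rw [hr n]; rfl⟩)
  cases nonempty_fintype ι
  exact ⟨Finset.univ.sup N,
    funext fun i => stays_zero i _ (hN i) _ (Finset.le_sup (Finset.mem_univ i))⟩

end StronglyNilpotent

section StronglyPClean

variable {R S : Type*} [Ring R] [Ring S]

theorem IsStronglyPClean.map {x : R} (h : IsStronglyPClean x) (f : R →+* S)
    (hf : Function.Surjective f) : IsStronglyPClean (f x) := by
  obtain ⟨e, w, he, hw, rfl, hew⟩ := h
  exact ⟨f e, f w, he.map f, hw.map f hf, map_add f e w, by rw [← map_mul, hew, map_mul]⟩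

theorem isStronglyPClean_of_mem_primeRadical {w : R} (hw : w ∈ primeRadical R) :
    IsStronglyPClean w :=
  ⟨0, w, .zero, hw, (zero_add w).symm, by rw [zero_mul, mul_zero]⟩

theorem isStronglyPClean_one_add {w : R} (hw : w ∈ primeRadical R) :
    IsStronglyPClean (1 + w) :=
  ⟨1, w, .one, hw, rfl, by rw [one_mul, mul_one]⟩

theorem IsLocalRing.eq_zero_or_eq_one_of_isIdempotentElem [IsLocalRing R] {e : R}
    (he : IsIdempotentElem e) : e = 0 ∨ e = 1 := by
  rcases IsLocalRing.isUnit_or_isUnit_of_add_one (add_sub_cancel e 1) with h | h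
  · exact Or.inr ((IsIdempotentElem.iff_eq_one_of_isUnit h).1 he)
  · exact Or.inl (sub_eq_self.1 ((IsIdempotentElem.iff_eq_one_of_isUnit h).1 he.one_sub))

theorem IsLocalRing.isStronglyPClean_iff [IsLocalRing R] {x : R} :
    IsStronglyPClean x ↔ x ∈ primeRadical R ∪ {y | ∃ w ∈ primeRadical R, y = 1 + w} := by
  constructor
  · rintro ⟨e, w, he, hw, rfl, -⟩
    rcases eq_zero_or_eq_one_of_isIdempotentElem he with rfl | rfl
    · exact Or.inl (by rwa [zero_add])
    · exact Or.inr ⟨w, hw, rfl⟩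
  · rintro (hx | ⟨w, hw, rfl⟩)
    · exact isStronglyPClean_of_mem_primeRadical hx
    · exact isStronglyPClean_one_add hw

end StronglyPClean

section Sylvester

variable {R : Type*} [Ring R]

theorem exists_mul_sub_mul_eq_of_isUnit {a b : R}
    (h : IsUnit (LinearMap.mulLeft ℤ a - LinearMap.mulRight ℤ b)) (v : R) :
    ∃ x, a * x - x * b = v :=
  ((Module.End.isUnit_iff _).1 h).2 v

theorem exists_mul_sub_mul_eq_of_isUnit_of_isNilpotent {a b : R} (ha : IsUnit a)
    (hb : IsNilpotent b) (v : R) : ∃ x, a * x - x * b = v := by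
  refine exists_mul_sub_mul_eq_of_isUnit ?_ v
  rw [sub_eq_add_neg]
  refine IsNilpotent.isUnit_add_left_of_commute ?_ ?_ ?_
  · exact ((LinearMap.isNilpotent_mulRight_iff ℤ b).2 hb).neg
  · exact Algebra.lmul_isUnit_iff.2 ha
  · exact (LinearMap.commute_mulLeft_right a b).symm.neg_left

theorem exists_mul_sub_mul_eq_of_isNilpotent_of_isUnit {a b : R} (ha : IsNilpotent a)
    (hb : IsUnit b) (v : R) : ∃ x, a * x - x * b = v := by
  refine exists_mul_sub_mul_eq_of_isUnit ?_ v
  rw [sub_eq_neg_add]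
  refine IsNilpotent.isUnit_add_left_of_commute ?_ ?_ ?_
  · exact (LinearMap.isNilpotent_mulLeft_iff ℤ a).2 ha
  · exact ((Module.End.isUnit_iff _).2 (Units.mulRight_bijective hb.unit)).neg
  · exact (LinearMap.commute_mulLeft_right a b).neg_right

end Sylvester

namespace upperTriangularSubring

variable {R : Type*} [Ring R]

def diag (n : ℕ) : upperTriangularSubring n R →+* (Fin n → R) where
  toFun X k := (X : Matrix (Fin n) (Fin n) R) k k
  map_zero' := rfl
  map_one' := funext fun k => Matrix.one_apply_eq k
  map_add' _ _ := rfl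
  map_mul' X Y := by
    funext k
    change ((X : Matrix (Fin n) (Fin n) R) * Y) k k = X.1 k k * Y.1 k k
    rw [Matrix.mul_apply, Finset.sum_eq_single k]
    · intro j _ hjk
      rcases lt_or_gt_of_ne hjk with h | h
      · rw [X.2 k j h, zero_mul]
      · rw [Y.2 j k h, mul_zero]
    · exact fun h => absurd (Finset.mem_univ k) h

theorem diag_surjective {n : ℕ} :
    Function.Surjective (diag n : upperTriangularSubring n R →+* _) := fun d =>
  ⟨⟨Matrix.diagonal d, fun _ _ h => Matrix.diagonal_apply_ne d (ne_of_gt h)⟩,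
    funext fun k => Matrix.diagonal_apply_eq d k⟩

def mk₂ (a v b : R) : upperTriangularSubring 2 R :=
  ⟨!![a, v; 0, b], by
    intro i j h
    fin_cases i <;> fin_cases j <;> first | exact absurd h (by decide) | rfl⟩

theorem diag_mk₂ (a v b : R) : diag 2 (mk₂ a v b) = ![a, b] := by
  funext k
  fin_cases k <;> rfl

theorem eq_mk₂ (X : upperTriangularSubring 2 R) :
    X = mk₂ (X.1 0 0) (X.1 0 1) (X.1 1 1) :=
  Subtype.ext (by rw [Matrix.eta_fin_two X.1, X.2 1 0 (by decide)]; rfl)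

theorem mk₂_add (a v b a' v' b' : R) :
    mk₂ a v b + mk₂ a' v' b' = mk₂ (a + a') (v + v') (b + b') :=
  Subtype.ext (by simp [mk₂])

theorem mk₂_mul (a v b a' v' b' : R) :
    mk₂ a v b * mk₂ a' v' b' = mk₂ (a * a') (a * v' + v * b') (b * b') :=
  Subtype.ext (by simp [mk₂])

theorem mk₂_zero : mk₂ 0 0 0 = (0 : upperTriangularSubring 2 R) :=
  Subtype.ext (Matrix.eta_fin_two 0).symm

theorem mk₂_one : mk₂ 1 0 1 = (1 : upperTriangularSubring 2 R) :=
  Subtype.ext Matrix.one_fin_two.symm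

theorem mul_mul_self_eq_zero_of_diag_eq_zero {X : upperTriangularSubring 2 R}
    (hX : diag 2 X = 0) (Y : upperTriangularSubring 2 R) : X * Y * X = 0 := by
  have h₀ : X.1 0 0 = 0 := congr_fun hX 0
  have h₁ : X.1 1 1 = 0 := congr_fun hX 1
  rw [eq_mk₂ X, eq_mk₂ Y, h₀, h₁, mk₂_mul, mk₂_mul]
  simp only [zero_mul, mul_zero, add_zero, mk₂_zero]

theorem mk₂_mem_primeRadical {a b : R} (ha : a ∈ primeRadical R) (hb : b ∈ primeRadical R)
    (v : R) : mk₂ a v b ∈ primeRadical (upperTriangularSubring 2 R) := by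
  refine IsStronglyNilpotent.of_map (diag 2)
    (fun X hX Y => mul_mul_self_eq_zero_of_diag_eq_zero hX Y) ?_
  rw [diag_mk₂]
  exact IsStronglyNilpotent.pi (Fin.forall_fin_two.2 ⟨ha, hb⟩)

theorem isStronglyPClean_mk₂_of_one_add_of_mem {w b : R} (hw : w ∈ primeRadical R)
    (hb : b ∈ primeRadical R) (v : R) : IsStronglyPClean (mk₂ (1 + w) v b) := by
  obtain ⟨x, hx⟩ := exists_mul_sub_mul_eq_of_isUnit_of_isNilpotent
    (IsStronglyNilpotent.isNilpotent hw).isUnit_one_add (IsStronglyNilpotent.isNilpotent hb) v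
  refine ⟨mk₂ 1 x 0, mk₂ w (v - x) b, ?_, mk₂_mem_primeRadical hw hb _, ?_, ?_⟩
  · rw [IsIdempotentElem, mk₂_mul]
    congr 1 <;> simp
  · rw [mk₂_add]
    congr 1 <;> simp
  · rw [mk₂_mul, mk₂_mul]
    congr 1 <;> simp only [one_mul, mul_one, zero_mul, mul_zero, add_zero]
    rw [← hx]
    noncomm_ring

theorem isStronglyPClean_mk₂_of_mem_of_one_add {a w : R} (ha : a ∈ primeRadical R)
    (hw : w ∈ primeRadical R) (v : R) : IsStronglyPClean (mk₂ a v (1 + w)) := by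
  obtain ⟨x, hx⟩ := exists_mul_sub_mul_eq_of_isNilpotent_of_isUnit
    (IsStronglyNilpotent.isNilpotent ha) (IsStronglyNilpotent.isNilpotent hw).isUnit_one_add (-v)
  refine ⟨mk₂ 0 x 1, mk₂ a (v - x) w, ?_, mk₂_mem_primeRadical ha hw _, ?_, ?_⟩
  · rw [IsIdempotentElem, mk₂_mul]
    congr 1 <;> simp
  · rw [mk₂_add]
    congr 1 <;> simp
  · rw [mk₂_mul, mk₂_mul]
    congr 1 <;> simp only [one_mul, mul_one, zero_mul, mul_zero, zero_add]
    rw [show v = x * (1 + w) - a * x by rw [← neg_sub, hx, neg_neg]]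
    noncomm_ring

end upperTriangularSubring

open upperTriangularSubring

/-- **Proposition 3.7.** Let `R` be a local ring and `A = [[a, v], [0, b]]` an
upper triangular `2 × 2` matrix over `R`. Then `A` is strongly P-clean in
`T₂(R)` iff `a` and `b` each lie in `P(R) ∪ (1 + P(R))`. -/
theorem isStronglyPClean_triangular_iff (R : Type*) [Ring R] [IsLocalRing R]
    (a v b : R) :
    IsStronglyPClean
      (⟨!![a, v; 0, b], by
        intro i j h
        fin_cases i <;> fin_cases j <;>
          first
            | exact absurd h (by decide)
            | simp⟩ : upperTriangularSubring 2 R) ↔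
      (a ∈ primeRadical R ∪ {y | ∃ w ∈ primeRadical R, y = 1 + w} ∧
        b ∈ primeRadical R ∪ {y | ∃ w ∈ primeRadical R, y = 1 + w}) := by
  change IsStronglyPClean (mk₂ a v b) ↔ _
  constructor
  · intro h
    have hdiag := h.map (diag 2) diag_surjective
    rw [diag_mk₂] at hdiag
    have hentry (k : Fin 2) : IsStronglyPClean (![a, b] k) :=
      hdiag.map (Pi.evalRingHom _ k) (Function.surjective_eval k)
    exact ⟨IsLocalRing.isStronglyPClean_iff.1 (hentry 0),
      IsLocalRing.isStronglyPClean_iff.1 (hentry 1)⟩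
  · rintro ⟨ha | ⟨w₀, hw₀, rfl⟩, hb | ⟨w₁, hw₁, rfl⟩⟩
    · exact isStronglyPClean_of_mem_primeRadical (mk₂_mem_primeRadical ha hb v)
    · exact isStronglyPClean_mk₂_of_mem_of_one_add ha hw₁ v
    · exact isStronglyPClean_mk₂_of_one_add_of_mem hw₀ hb v
    · have h : mk₂ (1 + w₀) v (1 + w₁) = 1 + mk₂ w₀ v w₁ := by
        rw [← mk₂_one, mk₂_add, zero_add]
      rw [h]
      exact isStronglyPClean_one_add (mk₂_mem_primeRadical hw₀ hw₁ v)
end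

section
/- Let R be a commutative local ring and A ∈ M₂(R). Then the following are equivalent: (1) A is strongly P-clean; (2) A − A² ∈ M₂(P(R)); (3) A ∈ M₂(P(R)), or I₂ − A ∈ M₂(P(R)), or the equation x² − tr(A)·x + det(A) = 0 has a root in P(R) and a root in 1 + P(R). -/
/-!
Over a commutative ring `P(Mₙ(R)) = Mₙ(P(R))`: the map `M ↦ M Eⱼᵢ M` squares the entry `M i j`,
so the entries of a strongly nilpotent matrix are nilpotent; conversely, if the entries of `M`
generate an ideal `I` with `I ^ N = 0`, the `k`-th term of any sequence `Mₖ₊₁ ∈ Mₖ Mₙ(R) Mₖ` lies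
in `Mₙ(I ^ (k + 1))`. Thus (1) ⇔ (2) is the lifting of the idempotent `A mod P(R)` along the nil
ideal `Mₙ(P(R))`, which can be done by a polynomial in `A`.

A `2 × 2` idempotent over a local ring is `0`, `1`, or has trace `1` and determinant `0`: its
determinant and, when that vanishes, its trace are idempotents (Cayley–Hamilton). Applied over
`R / P(R)`, the third case says that `x² - tr(A) x + det(A)` reduces to `x (x - 1)`, whose simple
roots `0` and `1` lift by Newton's iteration.
-/

section StronglyNilpotent

variable {R : Type*} [Ring R]

theorem IsStronglyNilpotent.exists_iterate_eq_zero {a : R} (ha : IsStronglyNilpotent a) (r : R) :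
    ∃ n, (fun x => x * r * x)^[n] a = 0 :=
  ha _ rfl fun i => ⟨r, Function.iterate_succ_apply' _ i a⟩

theorem iterate_mul_self_eq_pow (a : R) (n : ℕ) : (fun x => x * x)^[n] a = a ^ 2 ^ n := by
  induction n with
  | zero => simp
  | succ n ih => rw [Function.iterate_succ_apply', ih, pow_succ, pow_mul, sq]

theorem IsStronglyNilpotent.isNilpotent_s17 {a : R} (ha : IsStronglyNilpotent a) : IsNilpotent a := by
  obtain ⟨n, hn⟩ := ha.exists_iterate_eq_zero 1
  simp only [mul_one] at hn
  exact ⟨2 ^ n, by rwa [← iterate_mul_self_eq_pow]⟩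

theorem Matrix.isNilpotent_apply_of_isStronglyNilpotent {n : Type*} [Fintype n] [DecidableEq n]
    {M : Matrix n n R} (hM : IsStronglyNilpotent M) (i j : n) : IsNilpotent (M i j) := by
  have hsemiconj : Function.Semiconj (fun M : Matrix n n R => M i j)
      (fun M => M * Matrix.single j i 1 * M) (fun x => x * x) := fun M => by
    change (M * Matrix.single j i (1 : R) * M : Matrix n n R) i j = M i j * M i j
    rw [Matrix.mul_apply, Finset.sum_eq_single i] <;> simp_all
  obtain ⟨k, hk⟩ := hM.exists_iterate_eq_zero (Matrix.single j i 1)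
  refine ⟨2 ^ k, ?_⟩
  rw [← iterate_mul_self_eq_pow, ← (hsemiconj.iterate_right k) M, hk]
  rfl

end StronglyNilpotent

theorem Ideal.mul_mem_matrix_mul {R n : Type*} [Semiring R] [Fintype n] [DecidableEq n]
    {I J : Ideal R} {M N : Matrix n n R} (hM : M ∈ I.matrix n) (hN : N ∈ J.matrix n) :
    M * N ∈ (I * J).matrix n := fun i j => by
  rw [Matrix.mul_apply]
  exact Ideal.sum_mem _ fun k _ => Ideal.mul_mem_mul (hM i k) (hN k j)

theorem IsIdempotentElem.eq_zero_or_eq_one_of_isLocalRing {S : Type*} [Ring S] [IsLocalRing S]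
    {e : S} (he : IsIdempotentElem e) : e = 0 ∨ e = 1 := by
  rcases IsLocalRing.isUnit_or_isUnit_of_isUnit_add (by simp : IsUnit (e + (1 - e))) with h | h
  · exact .inr ((IsIdempotentElem.iff_eq_one_of_isUnit h).mp he)
  · exact .inl (sub_eq_self.mp ((IsIdempotentElem.iff_eq_one_of_isUnit h).mp he.one_sub))

section CommRing

variable {R n : Type*} [CommRing R] [Fintype n] [DecidableEq n]

theorem Matrix.isStronglyNilpotent_of_mem_matrix_nilradical {M : Matrix n n R}
    (hM : M ∈ (nilradical R).matrix n) : IsStronglyNilpotent M := by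
  set I : Ideal R := Ideal.span (Set.range (Function.uncurry M))
  have hMI : M ∈ I.matrix n := fun i j => Ideal.subset_span ⟨(i, j), rfl⟩
  obtain ⟨N, hN⟩ : ∃ N, I ^ N ≤ ⊥ :=
    Ideal.exists_pow_le_of_le_radical_of_fg (Ideal.span_le.mpr <| by
      rintro _ ⟨⟨i, j⟩, rfl⟩; exact hM i j) (Submodule.fg_span (Set.finite_range _))
  intro f hf0 hf
  have hfI : ∀ k, f k ∈ (I ^ (k + 1)).matrix n := by
    intro k
    induction k with
    | zero => simpa [hf0] using hMI
    | succ k ih =>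
      obtain ⟨r, hr⟩ := hf k
      rw [hr, Matrix.mul_assoc, pow_succ]
      exact Ideal.mul_mem_matrix_mul ih
        (Ideal.mul_mem_left _ r (Ideal.matrix_monotone n (Ideal.pow_le_self k.succ_ne_zero) ih))
  refine ⟨N, Matrix.ext fun i j => ?_⟩
  simpa using hN (Ideal.pow_le_pow_right N.le_succ (hfI N i j))

theorem primeRadical_matrix : primeRadical (Matrix n n R) = (nilradical R).matrix n :=
  Set.ext fun _ => ⟨fun hM i j => Matrix.isNilpotent_apply_of_isStronglyNilpotent hM i j,
    Matrix.isStronglyNilpotent_of_mem_matrix_nilradical⟩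

theorem Ideal.mapMatrix_mk_eq_zero_iff {I : Ideal R} {M : Matrix n n R} :
    (Ideal.Quotient.mk I).mapMatrix M = 0 ↔ M ∈ I.matrix n := by
  simp [← Matrix.ext_iff, Ideal.Quotient.eq_zero_iff_mem]

theorem Ideal.isIdempotentElem_mapMatrix_mk_iff {I : Ideal R} {A : Matrix n n R} :
    IsIdempotentElem ((Ideal.Quotient.mk I).mapMatrix A) ↔ A - A * A ∈ I.matrix n := by
  rw [← Ideal.mapMatrix_mk_eq_zero_iff, map_sub, map_mul, sub_eq_zero, eq_comm, IsIdempotentElem]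

theorem Matrix.isStronglyPClean_iff {A : Matrix n n R} :
    IsStronglyPClean A ↔ A - A * A ∈ (nilradical R).matrix n := by
  constructor
  · rintro ⟨e, w, he, hw, rfl, hew⟩
    rw [primeRadical_matrix] at hw
    have hsq : (e + w) * (e + w) = e + 2 * (e * w) + w * w := by
      rw [add_mul, mul_add, mul_add, he.eq, ← hew, two_mul]
      abel
    rw [hsq, show e + w - (e + 2 * (e * w) + w * w) = (1 - 2 * e - w) * w by noncomm_ring]
    exact Ideal.mul_mem_left _ _ hw
  · intro hA
    obtain ⟨m, hm⟩ := (Matrix.isStronglyNilpotent_of_mem_matrix_nilradical hA).isNilpotent_s17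
    -- The standard lift of the idempotent `A mod P(R)`; being a polynomial in `A`, it
    -- commutes with `A`.
    set e := 1 - (1 - A ^ (m + 1)) ^ (m + 1)
    have he : IsIdempotentElem e :=
      isIdempotentElem_one_sub_one_sub_pow_pow A (m + 1) (by rw [sq, pow_succ, hm, zero_mul])
    have hAe : Commute A e := (Commute.one_right A).sub_right
      (((Commute.one_right A).sub_right ((Commute.refl A).pow_right _)).pow_right _)
    refine ⟨e, A - e, he, ?_, by abel, (hAe.symm.sub_right (Commute.refl e)).eq⟩
    have hA' := Ideal.isIdempotentElem_mapMatrix_mk_iff.mpr hA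
    rw [primeRadical_matrix, SetLike.mem_coe, ← Ideal.mapMatrix_mk_eq_zero_iff]
    simp only [e, map_sub, map_one, map_pow, hA'.pow_succ_eq, hA'.one_sub.pow_succ_eq,
      sub_sub_cancel, sub_self]

theorem Matrix.mul_self_fin_two (A : Matrix (Fin 2) (Fin 2) R) :
    A * A = A.trace • A - A.det • 1 := by
  ext i j
  fin_cases i <;> fin_cases j <;>
    simp [Matrix.mul_apply, Matrix.trace_fin_two, Matrix.det_fin_two] <;> ring

theorem Matrix.isIdempotentElem_iff_fin_two [IsLocalRing R] {E : Matrix (Fin 2) (Fin 2) R} :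
    IsIdempotentElem E ↔ E = 0 ∨ E = 1 ∨ (E.trace = 1 ∧ E.det = 0) := by
  constructor
  · intro hE
    have hdet : IsIdempotentElem E.det := by rw [IsIdempotentElem, ← Matrix.det_mul, hE.eq]
    rcases hdet.eq_zero_or_eq_one_of_isLocalRing with hdet | hdet
    · have hE' : E = E.trace • E := by simpa [hdet, hE.eq] using Matrix.mul_self_fin_two E
      have htr : IsIdempotentElem E.trace := by
        rw [IsIdempotentElem, ← smul_eq_mul, ← Matrix.trace_smul, ← hE']
      rcases htr.eq_zero_or_eq_one_of_isLocalRing with htr | htr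
      · exact .inl (by rw [hE', htr, zero_smul])
      · exact .inr (.inr ⟨htr, hdet⟩)
    · have hunit : IsUnit E := (Matrix.isUnit_iff_isUnit_det E).mpr (hdet ▸ isUnit_one)
      exact .inr (.inl ((IsIdempotentElem.iff_eq_one_of_isUnit hunit).mp hE))
  · rintro (rfl | rfl | ⟨htr, hdet⟩)
    · exact .zero
    · exact .one
    · rw [IsIdempotentElem, Matrix.mul_self_fin_two, htr, hdet, one_smul, zero_smul, sub_zero]

theorem exists_root_mem_nilradical {t d : R} (ht : t - 1 ∈ nilradical R)
    (hd : d ∈ nilradical R) : ∃ x ∈ nilradical R, x * x - t * x + d = 0 := by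
  obtain ⟨k, hk⟩ : ∃ k, d ^ 2 ^ k = 0 :=
    let ⟨k, hk⟩ := hd; ⟨k, pow_eq_zero_of_le k.lt_two_pow_self.le hk⟩
  induction k generalizing t d with
  | zero => exact ⟨0, zero_mem _, by simpa using hk⟩
  | succ k ih =>
    obtain ⟨u, hu⟩ : ∃ u, t * u = 1 := by
      simpa using (mem_nilradical.mp ht).isUnit_one_add.exists_right_inv
    -- Newton step: `x = d / t + z`, where `z` is a root of a quadratic of the same shape whose
    -- constant term `(d / t) ^ 2` is nilpotent of half the order.
    obtain ⟨z, hz, hroot⟩ := ih (t := t - 2 * (d * u)) (d := (d * u) ^ 2)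
      (by simpa [sub_right_comm] using
        sub_mem ht (Ideal.mul_mem_left _ 2 (Ideal.mul_mem_right u _ hd)))
      (Ideal.pow_mem_of_mem _ (Ideal.mul_mem_right u _ hd) 2 two_pos)
      (by rw [← pow_mul, ← pow_succ', mul_pow, hk, zero_mul])
    exact ⟨d * u + z, add_mem (Ideal.mul_mem_right u _ hd) hz,
      by linear_combination hroot - d * hu⟩

theorem exists_root_mem_nilradical_and_exists_root_sub_one_mem_iff {t d : R} :
    ((∃ x ∈ nilradical R, x * x - t * x + d = 0) ∧
        ∃ y : R, y - 1 ∈ nilradical R ∧ y * y - t * y + d = 0) ↔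
      t - 1 ∈ nilradical R ∧ d ∈ nilradical R := by
  constructor
  · rintro ⟨⟨x, hx, hxroot⟩, y, hy, hyroot⟩
    have hunit : IsUnit (y - x) := by
      rw [show y - x = 1 + (y - 1 - x) by ring]
      exact (mem_nilradical.mp (sub_mem hy hx)).isUnit_one_add
    -- Vieta: two roots with a unit difference sum to `t`.
    have hsum : t = x + y := by
      obtain ⟨v, hv⟩ := hunit.exists_left_inv
      linear_combination (x + y - t) * hv - v * (hyroot - hxroot)
    refine ⟨by simpa [hsum, add_sub_assoc] using add_mem hx hy, ?_⟩
    rw [show d = x * (t - x) by linear_combination hxroot]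
    exact Ideal.mul_mem_right _ _ hx
  · rintro ⟨ht, hd⟩
    obtain ⟨x, hx, hroot⟩ := exists_root_mem_nilradical ht hd
    exact ⟨⟨x, hx, hroot⟩, t - x, by simpa [sub_right_comm] using sub_mem ht hx,
      by linear_combination hroot⟩

end CommRing

theorem Matrix.sub_mul_self_mem_matrix_nilradical_iff_fin_two {R : Type*} [CommRing R]
    [IsLocalRing R] {A : Matrix (Fin 2) (Fin 2) R} :
    A - A * A ∈ (nilradical R).matrix (Fin 2) ↔
      A ∈ (nilradical R).matrix (Fin 2) ∨ 1 - A ∈ (nilradical R).matrix (Fin 2) ∨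
        (A.trace - 1 ∈ nilradical R ∧ A.det ∈ nilradical R) := by
  set π := Ideal.Quotient.mk (nilradical R)
  have : Nontrivial (R ⧸ nilradical R) := Ideal.Quotient.nontrivial_iff.mpr <|
    ne_top_of_le_ne_top (IsLocalRing.maximalIdeal.isMaximal R).ne_top (nilradical_le_prime _)
  have : IsLocalRing (R ⧸ nilradical R) := .of_surjective' π Ideal.Quotient.mk_surjective
  rw [← Ideal.isIdempotentElem_mapMatrix_mk_iff, Matrix.isIdempotentElem_iff_fin_two,
    ← Ideal.mapMatrix_mk_eq_zero_iff, ← Ideal.mapMatrix_mk_eq_zero_iff (M := 1 - A), map_sub,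
    map_one, sub_eq_zero, eq_comm (a := (1 : Matrix (Fin 2) (Fin 2) (R ⧸ nilradical R))),
    ← RingHom.map_det, RingHom.mapMatrix_apply, ← AddMonoidHom.map_trace, ← map_one π,
    Ideal.Quotient.eq, Ideal.Quotient.eq_zero_iff_mem]

/-- **Theorem 4.4.** Let `R` be a commutative local ring and `A ∈ M₂(R)`
(here `P(R)` is the nilradical of `R`). The following are equivalent:
(1) `A` is strongly P-clean;
(2) `A - A² ∈ M₂(P(R))`;
(3) `A ∈ M₂(P(R))`, or `I₂ - A ∈ M₂(P(R))`, or the equation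
`x² - tr(A)·x + det(A) = 0` has a root in `P(R)` and a root in `1 + P(R)`. -/
theorem isStronglyPClean_matrix_commLocal_tfae (R : Type*) [CommRing R]
    [IsLocalRing R] (A : Matrix (Fin 2) (Fin 2) R) :
    [IsStronglyPClean A,
     ∀ i j, (A - A * A) i j ∈ nilradical R,
     (∀ i j, A i j ∈ nilradical R) ∨ (∀ i j, (1 - A) i j ∈ nilradical R) ∨
       ((∃ x ∈ nilradical R, x * x - A.trace * x + A.det = 0) ∧
         (∃ y : R, y - 1 ∈ nilradical R ∧ y * y - A.trace * y + A.det = 0))].TFAE := by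
  tfae_have 1 ↔ 2 := Matrix.isStronglyPClean_iff
  tfae_have 2 ↔ 3 := Matrix.sub_mul_self_mem_matrix_nilradical_iff_fin_two.trans <|
    or_congr_right <| or_congr_right
      exists_root_mem_nilradical_and_exists_root_sub_one_mem_iff.symm
  tfae_finish
end
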